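/- Define Ψ_k : L_n → L_n by (Ψ_k P)_{1,i} = P_{1,i-1} and (Ψ_k P)_{2,j} = P_{2,j-k} (indices mod n). Then Ψ_k maps L_n to itself and satisfies F_n(Ψ_k(P)) = (e^{2πi/n}·z, e^{2πik/n}·w) where (z,w) = F_n(P). -/

import Mathlib

open Complex

/-- `fTri n (x₁, x₂) = sin((π/2)(x₁+x₂)) · exp((2πi/n)·(x₂/(x₁+x₂)))` for `(x₁,x₂) ≠ (0,0)`,
and `fTri n (0,0) = 0`. -/
noncomputable def fTri (n : ℕ) (p : ℝ × ℝ) : ℂ :=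
  if p = (0, 0) then 0
  else ((Real.sin (Real.pi / 2 * (p.1 + p.2)) : ℝ) : ℂ) *
    Complex.exp (2 * Real.pi * Complex.I / n * ((p.2 / (p.1 + p.2) : ℝ) : ℂ))

/-- `(i,·)` is admissible for `Y` in the group `μ`: the support of `Y (μ, ·)` is contained
in the consecutive pair `{i, i+1}` of `ℤ/nℤ`. -/
def Adm (n : ℕ) (Y : Fin 2 × ZMod n → ℝ) (μ : Fin 2) (i : ZMod n) : Prop :=
  ∀ j : ZMod n, Y (μ, j) ≠ 0 → j = i ∨ j = i + 1

/-- `L_n ⊆ ℝ^{2n}`: nonnegative points, with coordinates indexed by `{1,2} × ℤ/nℤ`,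
summing to `1`, whose support in each `μ`-group is contained in a consecutive pair mod `n`. -/
def Ln (n : ℕ) [NeZero n] : Set (Fin 2 × ZMod n → ℝ) :=
  {Y | (∀ p, 0 ≤ Y p) ∧ (∑ p, Y p) = 1 ∧ ∀ μ : Fin 2, ∃ i : ZMod n, Adm n Y μ i}

/-- The `μ`-component of `F_n` computed with the admissible index `i`:
`e^{2πi·(i/n)} · f_n(Y_{μ,i}, Y_{μ,i+1})`. -/
noncomputable def Fcomp (n : ℕ) [NeZero n] (Y : Fin 2 × ZMod n → ℝ) (μ : Fin 2)
    (i : ZMod n) : ℂ :=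
  Complex.exp (2 * Real.pi * Complex.I * ((i.val : ℂ) / n)) * fTri n (Y (μ, i), Y (μ, i + 1))

/-- The map `F_n : L_n → ℂ²`, evaluated using a choice of admissible indices
(well defined by the well-definedness statement). -/
noncomputable def Fn (n : ℕ) [NeZero n] (P : Ln n) : ℂ × ℂ :=
  (Fcomp n P.1 0 (P.2.2.2 0).choose, Fcomp n P.1 1 (P.2.2.2 1).choose)

/-- The automorphism `Ψ_k` of `ℝ^{2n}`: `(Ψ_k P)_{1,i} = P_{1,i-1}` and
`(Ψ_k P)_{2,j} = P_{2,j-k}` (indices mod `n`). -/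
def Psi (n k : ℕ) (Y : Fin 2 × ZMod n → ℝ) : Fin 2 × ZMod n → ℝ :=
  fun p => Y (p.1, p.2 - (if p.1 = 0 then 1 else (k : ZMod n)))

/-!
`F_n` reads each component off an admissible window `{i, i+1}` as `χ(i) · f_n(Y_i, Y_{i+1})`, where
`χ = ZMod.stdAddChar` is the standard character of `ℤ/nℤ`. For `n ≥ 3` two distinct admissible
windows either overlap in a single point carrying all the mass of the group, where
`f_n(0, t) = χ(1) f_n(t, 0)` makes both windows give the same value, or the group has no mass
at all; so `F_n` does not depend on the choice. `Ψ_k` translates the `μ`-th group by `1` or `k`, which carries an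
admissible window `i` to `i + 1` resp. `i + k` and multiplies the component by `χ(1)` resp. `χ(k)`.
-/

variable {n : ℕ}

lemma ZMod.natCast_ne_zero_of_pos_of_lt {a : ℕ} (ha : 0 < a) (h : a < n) :
    (a : ZMod n) ≠ 0 := by
  rw [Ne, ZMod.natCast_eq_zero_iff]
  exact Nat.not_dvd_of_pos_of_lt ha h

lemma Adm.eq_zero {Y : Fin 2 × ZMod n → ℝ} {μ : Fin 2} {i j : ZMod n} (h : Adm n Y μ i)
    (h₀ : j ≠ i) (h₁ : j ≠ i + 1) : Y (μ, j) = 0 := by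
  by_contra hj
  exact (h j hj).elim h₀ h₁

def shift (n k : ℕ) (μ : Fin 2) : ZMod n := if μ = 0 then 1 else k

section Shift

variable {k : ℕ} {Y : Fin 2 × ZMod n → ℝ} {μ : Fin 2}

lemma Psi_apply_add_shift (j : ZMod n) : Psi n k Y (μ, j + shift n k μ) = Y (μ, j) := by
  change Y (μ, j + shift n k μ - shift n k μ) = _
  rw [add_sub_cancel_right]

lemma Adm.Psi {i : ZMod n} (h : Adm n Y μ i) (k : ℕ) :
    Adm n (Psi n k Y) μ (i + shift n k μ) := by
  intro j hj
  rcases h (j - shift n k μ) hj with h | h <;> rw [sub_eq_iff_eq_add] at h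
  · exact .inl h
  · exact .inr (h.trans (add_right_comm _ _ _))

end Shift

variable [NeZero n]

lemma stdAddChar_natCast (j : ℕ) :
    ZMod.stdAddChar (j : ZMod n) = Complex.exp (2 * Real.pi * Complex.I * j / n) := by
  simpa using ZMod.stdAddChar_coe (N := n) j

lemma stdAddChar_shift_zero (k : ℕ) :
    ZMod.stdAddChar (shift n k 0) = Complex.exp (2 * Real.pi * Complex.I / n) := by
  simpa [shift] using stdAddChar_natCast (n := n) 1

lemma stdAddChar_shift_one (k : ℕ) :
    ZMod.stdAddChar (shift n k 1) = Complex.exp (2 * Real.pi * Complex.I * k / n) := by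
  simpa [shift] using stdAddChar_natCast (n := n) k

lemma Fcomp_eq_stdAddChar_mul (Y : Fin 2 × ZMod n → ℝ) (μ : Fin 2) (i : ZMod n) :
    Fcomp n Y μ i = ZMod.stdAddChar i * fTri n (Y (μ, i), Y (μ, i + 1)) := by
  rw [Fcomp, ZMod.stdAddChar_apply, ZMod.toCircle_apply, mul_div_assoc]

lemma fTri_zero_left {t : ℝ} (ht : t ≠ 0) :
    fTri n (0, t) = ZMod.stdAddChar (1 : ZMod n) * fTri n (t, 0) := by
  rw [← Nat.cast_one, stdAddChar_natCast]
  simp [fTri, ht]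
  ring

section Fcomp

variable {Y : Fin 2 × ZMod n → ℝ} {μ : Fin 2}

lemma Fcomp_eq_zero {i : ZMod n} (h₀ : Y (μ, i) = 0) (h₁ : Y (μ, i + 1) = 0) :
    Fcomp n Y μ i = 0 := by
  simp [Fcomp, fTri, h₀, h₁]

lemma Fcomp_add_one {i : ZMod n} (h₀ : Y (μ, i) = 0) (h₂ : Y (μ, i + 1 + 1) = 0) :
    Fcomp n Y μ (i + 1) = Fcomp n Y μ i := by
  rw [Fcomp_eq_stdAddChar_mul, Fcomp_eq_stdAddChar_mul, h₀, h₂]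
  by_cases ht : Y (μ, i + 1) = 0
  · simp [fTri, ht]
  · rw [fTri_zero_left ht, AddChar.map_add_eq_mul]
    ring

lemma Fcomp_eq_of_adm (hn : 3 ≤ n) {i i' : ZMod n} (hi : Adm n Y μ i) (hi' : Adm n Y μ i') :
    Fcomp n Y μ i = Fcomp n Y μ i' := by
  have h₁ : (1 : ZMod n) ≠ 0 := by
    exact_mod_cast ZMod.natCast_ne_zero_of_pos_of_lt one_pos (by omega)
  have h₂ : (1 + 1 : ZMod n) ≠ 0 := by
    rw [one_add_one_eq_two]
    exact_mod_cast ZMod.natCast_ne_zero_of_pos_of_lt two_pos hn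
  have h_ne_succ_succ (a : ZMod n) : a ≠ a + 1 + 1 := by rw [add_assoc]; exact left_ne_add.2 h₂
  by_cases h_eq : i = i'
  · rw [h_eq]
  by_cases h_succ : i' = i + 1
  · subst h_succ
    exact (Fcomp_add_one (hi'.eq_zero h_eq (h_ne_succ_succ i))
      (hi.eq_zero (h_ne_succ_succ i).symm (add_ne_left.2 h₁))).symm
  by_cases h_pred : i = i' + 1
  · subst h_pred
    exact Fcomp_add_one (hi.eq_zero (Ne.symm h_eq) (h_ne_succ_succ i'))
      (hi'.eq_zero (h_ne_succ_succ i').symm (add_ne_left.2 h₁))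
  -- Neither window meets the support of the other, so both components vanish.
  rw [Fcomp_eq_zero (hi'.eq_zero h_eq h_pred) (hi'.eq_zero (Ne.symm h_succ) (by simpa using h_eq)),
    Fcomp_eq_zero (hi.eq_zero (Ne.symm h_eq) (by rintro rfl; exact h_succ rfl))
      (hi.eq_zero (by rintro rfl; exact h_pred rfl) (by simpa using Ne.symm h_eq))]

lemma Psi_mem_Ln (k : ℕ) (hY : Y ∈ Ln n) : Psi n k Y ∈ Ln n := by
  obtain ⟨h_nonneg, h_sum, h_adm⟩ := hY
  refine ⟨fun p => h_nonneg _, ?_, fun μ => ⟨_, (h_adm μ).choose_spec.Psi k⟩⟩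
  rw [← h_sum]
  exact Fintype.sum_equiv
    (Equiv.prodShear (Equiv.refl _) fun μ => Equiv.subRight (shift n k μ)) _ _ fun _ => rfl

variable {k : ℕ}

lemma Fcomp_Psi_add_shift (i : ZMod n) :
    Fcomp n (Psi n k Y) μ (i + shift n k μ) = ZMod.stdAddChar (shift n k μ) * Fcomp n Y μ i := by
  rw [Fcomp_eq_stdAddChar_mul, Fcomp_eq_stdAddChar_mul, Psi_apply_add_shift, add_right_comm,
    Psi_apply_add_shift, AddChar.map_add_eq_mul]
  ring

lemma Fcomp_Psi_of_adm (hn : 3 ≤ n) {i j : ZMod n} (hi : Adm n (Psi n k Y) μ i)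
    (hj : Adm n Y μ j) :
    Fcomp n (Psi n k Y) μ i = ZMod.stdAddChar (shift n k μ) * Fcomp n Y μ j := by
  rw [Fcomp_eq_of_adm hn hi (hj.Psi k), Fcomp_Psi_add_shift]

end Fcomp

theorem Psi_equivariant_general (n k : ℕ) [NeZero n] (hn : 3 ≤ n) :
    ∀ P : Ln n, ∃ h : Psi n k P.1 ∈ Ln n,
      Fn n ⟨Psi n k P.1, h⟩ =
        (Complex.exp (2 * Real.pi * Complex.I / n) * (Fn n P).1,
         Complex.exp (2 * Real.pi * Complex.I * k / n) * (Fn n P).2) := by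
  rintro ⟨Y, hY⟩
  have hΨ : Psi n k Y ∈ Ln n := Psi_mem_Ln k hY
  refine ⟨hΨ, Prod.ext ?_ ?_⟩
  · rw [← stdAddChar_shift_zero k]
    exact Fcomp_Psi_of_adm hn (hΨ.2.2 0).choose_spec (hY.2.2 0).choose_spec
  · rw [← stdAddChar_shift_one k]
    exact Fcomp_Psi_of_adm hn (hΨ.2.2 1).choose_spec (hY.2.2 1).choose_spec

/-- `Ψ_k` maps `L_n` to itself and satisfies
`F_n(Ψ_k(P)) = (e^{2πi/n}·z, e^{2πik/n}·w)` where `(z,w) = F_n(P)`. -/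
theorem Psi_equivariant (n k : ℕ) [NeZero n] (hn : 3 ≤ n) (hk : Nat.Coprime k n) :
    ∀ P : Ln n, ∃ h : Psi n k P.1 ∈ Ln n,
      Fn n ⟨Psi n k P.1, h⟩ =
        (Complex.exp (2 * Real.pi * Complex.I / n) * (Fn n P).1,
         Complex.exp (2 * Real.pi * Complex.I * k / n) * (Fn n P).2) :=
  Psi_equivariant_general n k hn
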